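/- arXiv:1008.4502 — 2 statements merged into one kernel-verified Lean document; each statement's English description precedes it below -/
import Mathlib

section
/- Let j : ℝ → [0,∞) be integrable with j(v) = j(−v), 𝓡 = ∫ j, σ = ∫ j(v)v² dv < ∞, and define φ(q) = ∫_ℝ j(v) e^{ivq} dv. For fixed λ > 0 and v ∈ ℝ, the function ψ_t(v) = exp(∫_0^t [φ(t^{−3/2}·(2/λ)(t−r)v) − φ(0)] dr) converges as t → ∞ to exp(−(2σ/(3λ²)) v²). -/
/-!
By evenness of `j`, `φ(q) - φ(0) = ∫ j(u) (cos(uq) - 1) du = -(q²/2) S(q)` where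
`S(q) = ∫ j(u) u² sinc(uq/2)² du` is continuous with `S(0) = σ`. With `α = 2v/λ` and the
substitution `t - r = t w`, the exponent becomes `-(α²/2) ∫₀¹ w² S(α t^{-1/2} w) dw`, which tends
to `-(α²/2) · σ/3` as `t → ∞`.
-/

open MeasureTheory Filter Topology Real

theorem Real.cos_sub_one_eq_neg_mul_sinc_sq (x : ℝ) :
    cos x - 1 = -(x ^ 2 / 2) * sinc (x / 2) ^ 2 := by
  rcases eq_or_ne x 0 with rfl | hx
  · simp
  · have h := cos_two_mul_eq_one_sub (x / 2)
    rw [mul_div_cancel₀ x two_ne_zero] at h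
    rw [sinc_of_ne_zero (div_ne_zero hx two_ne_zero), h]
    field_simp
    ring

theorem integral_mul_cexp_sub_integral_of_even {j : ℝ → ℝ} (hj : Integrable j)
    (hj_even : ∀ v, j (-v) = j v) (q : ℝ) :
    (∫ u, (j u : ℂ) * Complex.exp (Complex.I * ((u * q : ℝ) : ℂ))) - ∫ u, (j u : ℂ)
      = ((∫ u, j u * (cos (u * q) - 1) : ℝ) : ℂ) := by
  have hjC : Integrable fun u => (j u : ℂ) := hj.ofReal
  have hexp : Integrable fun u : ℝ => (j u : ℂ) * Complex.exp (Complex.I * ((u * q : ℝ) : ℂ)) :=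
    hjC.mul_bdd (c := 1) (by fun_prop) (ae_of_all _ fun u => by
      rw [mul_comm, Complex.norm_exp_ofReal_mul_I])
  have hcos : Integrable fun u => j u * (cos (u * q) - 1) :=
    hj.mul_bdd (c := 2) (by fun_prop) (ae_of_all _ fun u => by
      rw [Real.norm_eq_abs, abs_le]
      constructor <;> linarith [neg_one_le_cos (u * q), cos_le_one (u * q)])
  have hsin : Integrable fun u => j u * sin (u * q) :=
    hj.mul_bdd (c := 1) (by fun_prop) (ae_of_all _ fun u => abs_sin_le_one _)
  have hsplit : ∀ u : ℝ, (j u : ℂ) * Complex.exp (Complex.I * ((u * q : ℝ) : ℂ)) - j u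
      = ((j u * (cos (u * q) - 1) : ℝ) : ℂ) + Complex.I * ((j u * sin (u * q) : ℝ) : ℂ) := by
    intro u
    rw [mul_comm Complex.I, Complex.exp_mul_I, ← Complex.ofReal_cos, ← Complex.ofReal_sin]
    push_cast
    ring
  have hsin_zero := integral_neg_eq_self (fun u => j u * sin (u * q)) volume
  simp only [hj_even, neg_mul, sin_neg, mul_neg, integral_neg, neg_eq_self] at hsin_zero
  rw [← integral_sub hexp hjC, integral_congr_ae (ae_of_all _ hsplit),
    integral_add hcos.ofReal (hsin.ofReal.const_mul _), integral_const_mul, integral_complex_ofReal,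
    integral_complex_ofReal, hsin_zero]
  simp

theorem integral_mul_cos_sub_one_eq (j : ℝ → ℝ) (q : ℝ) :
    ∫ u, j u * (cos (u * q) - 1) = -(q ^ 2 / 2) * ∫ u, j u * u ^ 2 * sinc (u * q / 2) ^ 2 := by
  rw [← integral_const_mul]
  congr 1 with u
  rw [cos_sub_one_eq_neg_mul_sinc_sq]
  ring

theorem continuous_integral_mul_sinc_sq {j : ℝ → ℝ} (hj2 : Integrable fun u => j u * u ^ 2) :
    Continuous fun q => ∫ u, j u * u ^ 2 * sinc (u * q / 2) ^ 2 := by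
  refine continuous_of_dominated (bound := fun u => ‖j u * u ^ 2‖)
    (fun q => hj2.aestronglyMeasurable.mul (by fun_prop)) (fun q => ae_of_all _ fun u => ?_)
    hj2.norm (ae_of_all _ fun u => by fun_prop)
  rw [norm_mul, norm_pow, Real.norm_eq_abs (sinc _)]
  exact mul_le_of_le_one_right (norm_nonneg _) (pow_le_one₀ (abs_nonneg _) (abs_sinc_le_one _))

theorem integral_sq_mul_comp_sub_eq (S : ℝ → ℝ) (c : ℝ) {t : ℝ} (ht : 0 < t) :
    ∫ r in (0 : ℝ)..t, (c * (t - r)) ^ 2 * S (c * (t - r))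
      = c ^ 2 * t ^ 3 * ∫ w in (0 : ℝ)..1, w ^ 2 * S (c * t * w) := by
  have hrescale : (∫ w in (0 : ℝ)..1, w ^ 2 * S (c * t * w))
      = ∫ w in (0 : ℝ)..1, (fun s => (s / t) ^ 2 * S (c * s)) (t * w) := by
    congr 1 with w
    field_simp
  rw [intervalIntegral.integral_comp_sub_left (fun s => (c * s) ^ 2 * S (c * s)) t, hrescale,
    intervalIntegral.integral_comp_mul_left (fun s => (s / t) ^ 2 * S (c * s)) ht.ne']
  simp only [sub_self, sub_zero, mul_zero, mul_one, smul_eq_mul, mul_pow, mul_assoc,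
    intervalIntegral.integral_const_mul, div_eq_inv_mul]
  field_simp

theorem tendsto_integral_sq_mul_rescaled {S : ℝ → ℝ} (hS : Continuous S) (α : ℝ) :
    Tendsto (fun t : ℝ => ∫ r in (0 : ℝ)..t,
        (t ^ (-(3 : ℝ) / 2) * α * (t - r)) ^ 2 * S (t ^ (-(3 : ℝ) / 2) * α * (t - r)))
      atTop (𝓝 (α ^ 2 * S 0 / 3)) := by
  set G := fun h : ℝ => ∫ w in (0 : ℝ)..1, w ^ 2 * S (h * w)
  have hG : Continuous G :=
    intervalIntegral.continuous_parametric_intervalIntegral_of_continuous' (by fun_prop) 0 1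
  have hG0 : G 0 = S 0 / 3 := by
    norm_num [G, intervalIntegral.integral_mul_const, div_eq_inv_mul]
  have hscale : Tendsto (fun t : ℝ => t ^ (-(3 : ℝ) / 2) * α * t) atTop (𝓝 0) := by
    have hdecay : Tendsto (fun t : ℝ => α * t ^ (-(1 / 2 : ℝ))) atTop (𝓝 0) := by
      simpa using (tendsto_rpow_neg_atTop (by norm_num : (0 : ℝ) < 1 / 2)).const_mul α
    refine hdecay.congr' ?_
    filter_upwards [eventually_gt_atTop 0] with t ht
    rw [mul_right_comm, ← rpow_add_one ht.ne']
    norm_num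
    ring
  rw [mul_div_assoc, ← hG0]
  refine ((hG.tendsto 0).comp hscale).const_mul _ |>.congr' ?_
  filter_upwards [eventually_gt_atTop 0] with t ht
  have hpow : (t ^ (-(3 : ℝ) / 2)) ^ 2 * t ^ 3 = 1 := by
    rw [← rpow_natCast, ← rpow_natCast t 3, ← rpow_mul ht.le, ← rpow_add ht]
    norm_num
  simp only [Function.comp, G]
  rw [integral_sq_mul_comp_sub_eq S _ ht, mul_pow, mul_right_comm _ (α ^ 2), hpow, one_mul]

theorem stmt13_general (j : ℝ → ℝ) (hj : Integrable j)
    (hjsymm : ∀ v, j (-v) = j v)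
    (hj2 : Integrable fun u => j u * u ^ 2)
    (σ lam v : ℝ) (hσ : σ = ∫ u, j u * u ^ 2) :
    Filter.Tendsto
      (fun t : ℝ => Complex.exp
        (∫ r in (0:ℝ)..t,
          ((∫ u : ℝ, (j u : ℂ) *
              Complex.exp (Complex.I *
                ((u * (t ^ (-(3:ℝ)/2) * ((2 / lam) * (t - r) * v)) : ℝ) : ℂ)))
            - ∫ u : ℝ, (j u : ℂ))))
      Filter.atTop
      (nhds (Complex.exp (((-(2 * σ / (3 * lam ^ 2)) * v ^ 2 : ℝ)) : ℂ))) := by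
  set S := fun q : ℝ => ∫ u, j u * u ^ 2 * sinc (u * q / 2) ^ 2
  have hS0 : S 0 = σ := by simp [S, hσ]
  have hreal := (tendsto_integral_sq_mul_rescaled (continuous_integral_mul_sinc_sq hj2)
    (2 / lam * v)).const_mul (-(1 / 2))
  have hlimit : -(1 / 2) * ((2 / lam * v) ^ 2 * S 0 / 3) = -(2 * σ / (3 * lam ^ 2)) * v ^ 2 := by
    rw [hS0]
    ring
  rw [hlimit] at hreal
  refine ((Complex.continuous_exp.comp Complex.continuous_ofReal).tendsto _).comp hreal
    |>.congr fun t => ?_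
  dsimp only [Function.comp_apply]
  rw [← intervalIntegral.integral_const_mul]
  refine congrArg Complex.exp (intervalIntegral.integral_ofReal.symm.trans
    (intervalIntegral.integral_congr fun r _ => ?_))
  rw [show t ^ (-(3 : ℝ) / 2) * (2 / lam * (t - r) * v)
      = t ^ (-(3 : ℝ) / 2) * (2 / lam * v) * (t - r) by ring,
    integral_mul_cexp_sub_integral_of_even hj hjsymm, integral_mul_cos_sub_one_eq]
  push_cast
  ring

/-- With `φ(q) = ∫ j(v) e^{ivq} dv` for a symmetric integrable jump-rate density `j` with
finite second moment `σ`, the function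
`ψ_t(v) = exp(∫_0^t [φ(t^{−3/2}(2/λ)(t−r)v) − φ(0)] dr)` converges as `t → ∞` to
`exp(−(2σ/(3λ²)) v²)`. -/
theorem stmt13 (j : ℝ → ℝ) (hj : Integrable j) (hjnn : ∀ v, 0 ≤ j v)
    (hjsymm : ∀ v, j (-v) = j v)
    (hj2 : Integrable fun u => j u * u ^ 2)
    (σ lam v : ℝ) (hσ : σ = ∫ u, j u * u ^ 2) (hlam : 0 < lam) :
    Filter.Tendsto
      (fun t : ℝ => Complex.exp
        (∫ r in (0:ℝ)..t,
          ((∫ u : ℝ, (j u : ℂ) *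
              Complex.exp (Complex.I *
                ((u * (t ^ (-(3:ℝ)/2) * ((2 / lam) * (t - r) * v)) : ℝ) : ℂ)))
            - ∫ u : ℝ, (j u : ℂ))))
      Filter.atTop
      (nhds (Complex.exp (((-(2 * σ / (3 * lam ^ 2)) * v ^ 2 : ℝ)) : ℂ))) :=
  stmt13_general j hj hjsymm hj2 σ lam v hσ
end

section
/- Let 𝐪 : ℝ → ℝ satisfy the Krönig–Penney relation cos(2πk) = cos(2π𝐪(k)) + (α/(2𝐪(k))) sin(2π𝐪(k)) for k ∉ (1/2)ℤ, with 𝐪 increasing, antisymmetric, and 𝐪(n/2) = n/2 for n ∈ ℤ, where α > 0. Then there exists K > 0 such that for all |k| ≥ K, |𝐪(k) − k| ≤ α/(π|k|). -/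
/-!
Off the half-integer lattice, `k` and `𝐪(k)` lie in the same cell `(n/2, (n+1)/2)` because `𝐪` is
increasing and fixes the lattice. Shifting by `nπ`, the angles `a = 2πk - nπ` and `b = 2π𝐪(k) - nπ`
lie in `(0, π)` and satisfy `cos a - cos b = β sin b` with `β = α/(2𝐪(k))`. Writing this as
`2 sin s sin d = β sin (s + d)` with `s = (a+b)/2`, `d = (b-a)/2` gives `sin d ≤ β`, and Jordan's
inequality turns it into `b - a ≤ πβ`, i.e. `0 ≤ 𝐪(k) - k ≤ α/(4𝐪(k)) ≤ α/(4k)`.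
Negative `k` reduce to positive ones by antisymmetry.
-/

open Real Set

theorem le_of_cos_sub_cos_eq_mul_sin {a b β : ℝ} (hβ : 0 ≤ β) (ha : a ≤ π) (hb : b ∈ Icc 0 π)
    (h : cos a - cos b = β * sin b) : a ≤ b := by
  by_contra! hba
  have hcos : cos a < cos b := cos_lt_cos_of_nonneg_of_le_pi hb.1 ha hba
  nlinarith [mul_nonneg hβ (sin_nonneg_of_nonneg_of_le_pi hb.1 hb.2)]

theorem sin_half_sub_le_of_cos_sub_cos_eq_mul_sin {a b β : ℝ} (hβ : 0 ≤ β) (ha : 0 < a)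
    (hab : a ≤ b) (hb : b < π) (h : cos a - cos b = β * sin b) : sin ((b - a) / 2) ≤ β := by
  set s := (a + b) / 2 with hs_def
  set d := (b - a) / 2 with hd_def
  have hs : 0 < sin s := sin_pos_of_pos_of_lt_pi (by linarith) (by linarith)
  have hd : 0 ≤ sin d := sin_nonneg_of_nonneg_of_le_pi (by linarith) (by linarith)
  have hprod : 2 * sin s * sin d = β * (sin s * cos d + cos s * sin d) := by
    have hcos : cos a - cos b = 2 * sin s * sin d := by
      rw [cos_sub_cos, show (a - b) / 2 = -d by ring, sin_neg]; ring
    rw [← hcos, ← sin_add, show s + d = b by ring, h]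
  rcases le_or_gt (β * cos s) (sin s) with hc | hc
  · have hmul : sin s * sin d ≤ sin s * β := by
      nlinarith [mul_le_mul_of_nonneg_right hc hd,
        mul_le_mul_of_nonneg_left (cos_le_one d) (mul_nonneg hβ hs.le)]
    exact le_of_mul_le_mul_left hmul hs
  · -- here `cos s > 0`, so `d ≤ s ≤ π/2` and `sin d ≤ sin s < β cos s ≤ β`
    have hs2 : s ≤ π / 2 := by
      by_contra! hs2
      nlinarith [cos_nonpos_of_pi_div_two_le_of_le hs2.le (by linarith)]
    have hds : sin d ≤ sin s := sin_le_sin_of_le_of_le_pi_div_two (by linarith) hs2 (by linarith)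
    nlinarith [cos_le_one s]

theorem sub_le_pi_mul_of_cos_sub_cos_eq_mul_sin {a b β : ℝ} (hβ : 0 ≤ β) (ha : a ∈ Ioo 0 π)
    (hb : b ∈ Ioo 0 π) (h : cos a - cos b = β * sin b) : a ≤ b ∧ b - a ≤ π * β := by
  have hab := le_of_cos_sub_cos_eq_mul_sin hβ ha.2.le (Ioo_subset_Icc_self hb) h
  have hsin := sin_half_sub_le_of_cos_sub_cos_eq_mul_sin hβ ha.1 hab hb.2 h
  have hjordan : 2 / π * ((b - a) / 2) ≤ sin ((b - a) / 2) :=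
    mul_le_sin (by linarith) (by linarith [hb.2, ha.1])
  refine ⟨hab, ?_⟩
  calc b - a = π * (2 / π * ((b - a) / 2)) := by field_simp
    _ ≤ π * β := by gcongr; exact hjordan.trans hsin

theorem cos_sub_cos_eq_mul_sin_of_add_int_mul_pi {a b β : ℝ} (n : ℤ)
    (h : cos (a + n * π) = cos (b + n * π) + β * sin (b + n * π)) :
    cos a - cos b = β * sin b := by
  rw [cos_add_int_mul_pi, cos_add_int_mul_pi, sin_add_int_mul_pi] at h
  have hsign : ((-1 : ℝ) ^ n) ≠ 0 := zpow_ne_zero _ (by norm_num)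
  have := mul_left_cancel₀ hsign (h.trans (by ring) :
    (-1 : ℝ) ^ n * cos a = (-1) ^ n * (cos b + β * sin b))
  linarith

theorem mem_Ioo_floor_two_mul_div_two {k : ℝ} (hk : ∀ n : ℤ, k ≠ (n : ℝ) / 2) :
    k ∈ Ioo ((⌊2 * k⌋ : ℝ) / 2) (((⌊2 * k⌋ + 1 : ℤ) : ℝ) / 2) := by
  have hlow : (⌊2 * k⌋ : ℝ) ≠ 2 * k := fun h => hk ⌊2 * k⌋ (by linarith)
  have := (Int.floor_le (2 * k)).lt_of_ne hlow
  have := Int.lt_floor_add_one (2 * k)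
  constructor <;> push_cast <;> linarith

theorem two_pi_mul_sub_int_mul_pi_mem_Ioo {x : ℝ} {n : ℤ}
    (hx : x ∈ Ioo ((n : ℝ) / 2) (((n + 1 : ℤ) : ℝ) / 2)) : 2 * π * x - n * π ∈ Ioo 0 π := by
  obtain ⟨h₁, h₂⟩ := hx
  push_cast at h₂
  constructor <;> nlinarith [pi_pos]

theorem abs_sub_le_div_four_mul {α : ℝ} (hα : 0 ≤ α) {q : ℝ → ℝ}
    (hKP : ∀ k : ℝ, (∀ n : ℤ, k ≠ (n : ℝ) / 2) →
      cos (2 * π * k) = cos (2 * π * q k) + α / (2 * q k) * sin (2 * π * q k))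
    (hmono : StrictMono q) (hlat : ∀ n : ℤ, q ((n : ℝ) / 2) = (n : ℝ) / 2) {k : ℝ} (hk : 0 < k) :
    |q k - k| ≤ α / (4 * k) := by
  by_cases hk_lat : ∃ n : ℤ, k = (n : ℝ) / 2
  · obtain ⟨n, rfl⟩ := hk_lat
    rw [hlat, sub_self, abs_zero]
    positivity
  push Not at hk_lat
  set n := ⌊2 * k⌋
  have hk_cell := mem_Ioo_floor_two_mul_div_two hk_lat
  have hq_cell : q k ∈ Ioo ((n : ℝ) / 2) (((n + 1 : ℤ) : ℝ) / 2) := by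
    simpa only [hlat] using hmono.mapsTo_Ioo hk_cell
  have hq : 0 < q k := by
    have : (0 : ℝ) ≤ n := by exact_mod_cast Int.floor_nonneg.2 (by positivity)
    linarith [hq_cell.1]
  have hcos := cos_sub_cos_eq_mul_sin_of_add_int_mul_pi n (a := 2 * π * k - n * π)
    (b := 2 * π * q k - n * π) (by simpa only [sub_add_cancel] using hKP k hk_lat)
  obtain ⟨hle, hsub⟩ := sub_le_pi_mul_of_cos_sub_cos_eq_mul_sin (by positivity)
    (two_pi_mul_sub_int_mul_pi_mem_Ioo hk_cell) (two_pi_mul_sub_int_mul_pi_mem_Ioo hq_cell) hcos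
  have hkq : k ≤ q k := by nlinarith [pi_pos]
  have hgap : 2 * π * (q k - k) ≤ π * (α / (2 * q k)) := by linarith
  rw [abs_of_nonneg (by linarith)]
  calc q k - k = 2 * π * (q k - k) / (2 * π) := by field_simp
    _ ≤ π * (α / (2 * q k)) / (2 * π) := by gcongr
    _ = α / (4 * q k) := by field_simp; ring
    _ ≤ α / (4 * k) := by gcongr

theorem abs_sub_self_eq_abs_sub_abs {q : ℝ → ℝ} (hodd : ∀ k, q (-k) = -q k) (k : ℝ) :
    |q k - k| = |q (|k|) - (|k|)| := by
  rcases abs_choice k with hk | hk <;> rw [hk]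
  rw [hodd, ← abs_neg]
  ring_nf

/-- If `𝐪 : ℝ → ℝ` satisfies the Krönig–Penney relation
`cos(2πk) = cos(2π𝐪(k)) + (α/(2𝐪(k))) sin(2π𝐪(k))` off the half-integer lattice, is
increasing and antisymmetric with `𝐪(n/2) = n/2`, then there is `K > 0` such that
`|𝐪(k) − k| ≤ α/(π|k|)` for all `|k| ≥ K`. -/
theorem stmt14 (α : ℝ) (hα : 0 < α) (q : ℝ → ℝ)
    (hKP : ∀ k : ℝ, (∀ n : ℤ, k ≠ (n : ℝ) / 2) →
      Real.cos (2 * Real.pi * k) =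
        Real.cos (2 * Real.pi * q k) + α / (2 * q k) * Real.sin (2 * Real.pi * q k))
    (hmono : StrictMono q) (hodd : ∀ k, q (-k) = -q k)
    (hlat : ∀ n : ℤ, q ((n : ℝ) / 2) = (n : ℝ) / 2) :
    ∃ K : ℝ, 0 < K ∧ ∀ k : ℝ, K ≤ |k| → |q k - k| ≤ α / (Real.pi * |k|) := by
  refine ⟨1, one_pos, fun k hk => ?_⟩
  have hk0 : 0 < |k| := by linarith
  rw [abs_sub_self_eq_abs_sub_abs hodd]
  calc |q (|k|) - (|k|)| ≤ α / (4 * |k|) := abs_sub_le_div_four_mul hα.le hKP hmono hlat hk0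
    _ ≤ α / (π * |k|) := by gcongr; exact pi_le_four
end
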